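/- Let n ≥ 2 and let Q ≥ 3 be an integer. Let (G(k))_{k≥1} be rooted communication graphs on n nodes and Ĝ(ℓ) = G((ℓ−1)(n−1)+1) ∘ ⋯ ∘ G(ℓ(n−1)) the macro-round graphs. Let x : ℕ → ℝ^n be the quantized amortized mid-point execution: every x(0)_p lies in [0,1] and is an integer multiple of 1/Q, and for each ℓ ≥ 1 and each p, x(ℓ)_p = ⌊Q·(m_p + M_p)/2⌋/Q, where m_p and M_p are the minimum and maximum of {x(ℓ−1)_q : q ∈ In_p(Ĝ(ℓ))}. Then for every macro-round ℓ ≥ ⌊log₂(Q−2)⌋ + 2, δ(x(ℓ)) ≤ 1/Q. (The quantized amortized mid-point algorithm achieves 1/Q-agreement by round (n−1)·(⌊log₂(Q−2)⌋ + 2) in any rooted network model.) -/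
import Mathlib


/-- `δ(x) = max_p x_p − min_p x_p`. -/
noncomputable def delta {n : ℕ} (x : Fin n → ℝ) : ℝ :=
  sSup (Set.range x) - sInf (Set.range x)

/-- A communication graph is rooted if there is a node `r` from which every node is
reachable by a directed path. -/
def Rooted {n : ℕ} (E : Fin n → Fin n → Prop) : Prop :=
  ∃ r, ∀ p, Relation.ReflTransGen E r p

/-- `ProdSeg G a m` is the product `G (a+1) ∘ G (a+2) ∘ ⋯ ∘ G (a+m)`, where the product
`G ∘ H` has an edge `(p,q)` iff there is `r` with `(p,r) ∈ G` and `(r,q) ∈ H`;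
the empty product is the identity graph. -/
def ProdSeg {n : ℕ} (G : ℕ → Fin n → Fin n → Prop) (a : ℕ) : ℕ → Fin n → Fin n → Prop
  | 0 => fun p q => p = q
  | m + 1 => fun p q => ∃ r, ProdSeg G a m p r ∧ G (a + m + 1) r q

/-- Rounding down to the nearest multiple of `1/Q`. -/
noncomputable def roundQ (Q : ℕ) (v : ℝ) : ℝ := (⌊(Q : ℝ) * v⌋ : ℝ) / (Q : ℝ)

lemma prodSeg_refl {n : ℕ} (G : ℕ → Fin n → Fin n → Prop)
    (h : ∀ k, 1 ≤ k → ∀ p, G k p p) (a m : ℕ) (p : Fin n) : ProdSeg G a m p p := by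
  induction m with
  | zero => rfl
  | succ m ih => exact ⟨p, ih, h (a + m + 1) (by omega) p⟩

lemma prodSeg_succ_left {n : ℕ} (G : ℕ → Fin n → Fin n → Prop) (a m : ℕ) (c q : Fin n) :
    ProdSeg G a (m + 1) c q ↔ ∃ r, G (a + 1) c r ∧ ProdSeg G (a + 1) m r q := by
  induction m generalizing q with
  | zero =>
    constructor
    · rintro ⟨r, hr, hrq⟩
      cases hr
      exact ⟨q, hrq, rfl⟩
    · rintro ⟨r, hcr, hr⟩
      cases hr
      exact ⟨c, rfl, hcr⟩
  | succ m ih =>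
    constructor
    · rintro ⟨r, hr, hrq⟩
      obtain ⟨s, hcs, hs⟩ := (ih r).mp hr
      refine ⟨s, hcs, r, hs, ?_⟩
      have : a + (m + 1) + 1 = a + 1 + m + 1 := by omega
      rw [this] at hrq
      exact hrq
    · rintro ⟨s, hcs, r, hs, hrq⟩
      refine ⟨r, (ih r).mpr ⟨s, hcs, hs⟩, ?_⟩
      rwa [show a + (m + 1) + 1 = a + 1 + m + 1 by omega]

lemma root_mem_closed {n : ℕ} {E : Fin n → Fin n → Prop} {ρ : Fin n}
    (hρ : ∀ p, Relation.ReflTransGen E ρ p) {S : Set (Fin n)}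
    (hcl : ∀ c r, E c r → r ∈ S → c ∈ S) {s : Fin n} (hs : s ∈ S) : ρ ∈ S := by
  have key : ∀ t, Relation.ReflTransGen E ρ t → t ∈ S → ρ ∈ S := by
    intro t h
    induction h with
    | refl => exact fun h => h
    | tail h₁ h₂ ih => exact fun hc => ih (hcl _ _ h₂ hc)
  exact key s (hρ s) hs

lemma key_nonsplit {n : ℕ} (hn : 2 ≤ n) (G : ℕ → Fin n → Fin n → Prop)
    (hrefl : ∀ k, 1 ≤ k → ∀ p, G k p p)
    (hrooted : ∀ k, 1 ≤ k → Rooted (G k)) (a : ℕ) (p q : Fin n) :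
    ∃ c, ProdSeg G a (n - 1) c p ∧ ProdSeg G a (n - 1) c q := by
  have main : ∀ m a (p q : Fin n),
      (∃ c, ProdSeg G a m c p ∧ ProdSeg G a m c q) ∨
      m + 2 ≤ {c | ProdSeg G a m c p}.ncard + {c | ProdSeg G a m c q}.ncard := by
    intro m
    induction m with
    | zero =>
      intro a p q
      right
      have hp : {c : Fin n | ProdSeg G a 0 c p} = {p} := by ext c; simp [ProdSeg]
      have hq : {c : Fin n | ProdSeg G a 0 c q} = {q} := by ext c; simp [ProdSeg]
      rw [hp, hq, Set.ncard_singleton, Set.ncard_singleton]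
    | succ m ih =>
      intro a p q
      have hsubA : {c | ProdSeg G (a + 1) m c p} ⊆ {c | ProdSeg G a (m + 1) c p} := by
        intro c hc
        exact (prodSeg_succ_left G a m c p).mpr ⟨c, hrefl (a + 1) (by omega) c, hc⟩
      have hsubB : {c | ProdSeg G (a + 1) m c q} ⊆ {c | ProdSeg G a (m + 1) c q} := by
        intro c hc
        exact (prodSeg_succ_left G a m c q).mpr ⟨c, hrefl (a + 1) (by omega) c, hc⟩
      rcases ih (a + 1) p q with ⟨c, h1, h2⟩ | hsum
      · exact Or.inl ⟨c, hsubA h1, hsubB h2⟩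
      by_cases hcom : ∃ c, ProdSeg G a (m + 1) c p ∧ ProdSeg G a (m + 1) c q
      · exact Or.inl hcom
      right
      have hgrow : ¬ ({c | ProdSeg G a (m + 1) c p} ⊆ {c | ProdSeg G (a + 1) m c p}) ∨
          ¬ ({c | ProdSeg G a (m + 1) c q} ⊆ {c | ProdSeg G (a + 1) m c q}) := by
        by_contra hcon
        push_neg at hcon
        obtain ⟨ρ, hρ⟩ := hrooted (a + 1) (by omega)
        have hclA : ∀ c r, G (a + 1) c r → r ∈ {c | ProdSeg G (a + 1) m c p} →
            c ∈ {c | ProdSeg G (a + 1) m c p} := by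
          intro c r hcr hr
          exact hcon.1 ((prodSeg_succ_left G a m c p).mpr ⟨r, hcr, hr⟩)
        have hclB : ∀ c r, G (a + 1) c r → r ∈ {c | ProdSeg G (a + 1) m c q} →
            c ∈ {c | ProdSeg G (a + 1) m c q} := by
          intro c r hcr hr
          exact hcon.2 ((prodSeg_succ_left G a m c q).mpr ⟨r, hcr, hr⟩)
        have hρA : ρ ∈ {c | ProdSeg G (a + 1) m c p} :=
          root_mem_closed hρ hclA (prodSeg_refl G hrefl (a + 1) m p)
        have hρB : ρ ∈ {c | ProdSeg G (a + 1) m c q} :=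
          root_mem_closed hρ hclB (prodSeg_refl G hrefl (a + 1) m q)
        exact hcom ⟨ρ, hsubA hρA, hsubB hρB⟩
      have hcA : {c | ProdSeg G (a + 1) m c p}.ncard ≤ {c | ProdSeg G a (m + 1) c p}.ncard :=
        Set.ncard_le_ncard hsubA (Set.toFinite _)
      have hcB : {c | ProdSeg G (a + 1) m c q}.ncard ≤ {c | ProdSeg G a (m + 1) c q}.ncard :=
        Set.ncard_le_ncard hsubB (Set.toFinite _)
      rcases hgrow with h | h
      · have h1 : {c | ProdSeg G (a + 1) m c p}.ncard < {c | ProdSeg G a (m + 1) c p}.ncard :=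
          Set.ncard_lt_ncard ⟨hsubA, h⟩ (Set.toFinite _)
        omega
      · have h1 : {c | ProdSeg G (a + 1) m c q}.ncard < {c | ProdSeg G a (m + 1) c q}.ncard :=
          Set.ncard_lt_ncard ⟨hsubB, h⟩ (Set.toFinite _)
        omega
  rcases main (n - 1) a p q with h | h
  · exact h
  by_contra hno
  push_neg at hno
  have hdisj : Disjoint {c | ProdSeg G a (n - 1) c p} {c | ProdSeg G a (n - 1) c q} :=
    Set.disjoint_left.mpr fun c ha hb => hno c ha hb
  have hun := Set.ncard_union_add_ncard_inter {c | ProdSeg G a (n - 1) c p}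
    {c | ProdSeg G a (n - 1) c q} (Set.toFinite _) (Set.toFinite _)
  have hint0 : ({c | ProdSeg G a (n - 1) c p} ∩ {c | ProdSeg G a (n - 1) c q}).ncard = 0 := by
    rw [Set.disjoint_iff_inter_eq_empty.mp hdisj, Set.ncard_empty]
  have hle : ({c | ProdSeg G a (n - 1) c p} ∪ {c | ProdSeg G a (n - 1) c q}).ncard ≤ n := by
    have := Set.ncard_le_ncard (Set.subset_univ
      ({c | ProdSeg G a (n - 1) c p} ∪ {c | ProdSeg G a (n - 1) c q})) (Set.toFinite _)
    simpa [Set.ncard_univ] using this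
  omega

lemma roundQ_le {Q : ℕ} (hQ0 : (0:ℝ) < Q) (v : ℝ) : roundQ Q v ≤ v := by
  rw [roundQ, div_le_iff₀ hQ0, mul_comm]
  exact Int.floor_le _

lemma roundQ_ge_half {Q : ℕ} (hQ0 : (0:ℝ) < Q) (z1 z2 : ℤ) :
    ((z1:ℝ)/Q + (z2:ℝ)/Q)/2 - 1/(2*Q) ≤ roundQ Q (((z1:ℝ)/Q + (z2:ℝ)/Q)/2) := by
  have hQne : (Q:ℝ) ≠ 0 := ne_of_gt hQ0
  have harg : (Q:ℝ) * (((z1:ℝ)/Q + (z2:ℝ)/Q)/2) = ((z1 + z2 : ℤ):ℝ)/2 := by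
    push_cast; field_simp
  set k : ℤ := z1 + z2 with hkdef
  have h1 : ((k/2 : ℤ):ℝ) ≤ (k:ℝ)/2 := by
    have h2 : (2*(k/2) : ℤ) ≤ k := by omega
    have := (Int.cast_le (R := ℝ)).mpr h2
    push_cast at this
    linarith
  have h2 : ((k:ℝ) - 1)/2 ≤ ((k/2 : ℤ):ℝ) := by
    have h3 : k ≤ (2*(k/2) : ℤ) + 1 := by omega
    have := (Int.cast_le (R := ℝ)).mpr h3
    push_cast at this
    linarith
  have key : ((k:ℝ) - 1)/2 ≤ (⌊(k:ℝ)/2⌋ : ℝ) := by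
    have : (k/2 : ℤ) ≤ ⌊(k:ℝ)/2⌋ := Int.le_floor.mpr h1
    have := (Int.cast_le (R := ℝ)).mpr this
    linarith
  rw [roundQ, harg]
  have heq : ((z1:ℝ)/Q + (z2:ℝ)/Q)/2 - 1/(2*Q) = (((k:ℝ) - 1)/2)/Q := by
    rw [hkdef]; push_cast; field_simp
  rw [heq]
  gcongr

theorem quantized_amortized_midpoint_agreement
    (n Q : ℕ) (hn : 2 ≤ n) (hQ : 3 ≤ Q)
    (G : ℕ → Fin n → Fin n → Prop)
    (hrefl : ∀ k, 1 ≤ k → ∀ p, G k p p)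
    (hrooted : ∀ k, 1 ≤ k → Rooted (G k))
    (x : ℕ → Fin n → ℝ)
    (hx0 : ∀ p, x 0 p ∈ Set.Icc (0 : ℝ) 1 ∧ ∃ z : ℤ, x 0 p = (z : ℝ) / (Q : ℝ))
    -- at each macro-round `l ≥ 1`, each process `p` adopts the rounded mid-point
    -- `⌊Q·(m_p + M_p)/2⌋/Q` of the values received along the macro-round graph
    -- `Ĝ(l) = G((l−1)(n−1)+1) ∘ ⋯ ∘ G(l(n−1))`
    (hupd : ∀ l, 1 ≤ l → ∀ p,
      x l p = roundQ Q
        ((sInf (x (l - 1) '' {q | ProdSeg G ((l - 1) * (n - 1)) (n - 1) q p}) +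
          sSup (x (l - 1) '' {q | ProdSeg G ((l - 1) * (n - 1)) (n - 1) q p})) / 2)) :
    ∀ l : ℕ, ⌊Real.logb 2 ((Q : ℝ) - 2)⌋₊ + 2 ≤ l → delta (x l) ≤ 1 / (Q : ℝ) := by

  have hQ0 : (0:ℝ) < (Q:ℝ) := by
    have : 0 < Q := by omega
    exact_mod_cast this
  have hQne : (Q:ℝ) ≠ 0 := ne_of_gt hQ0
  have hNE : Nonempty (Fin n) := ⟨⟨0, by omega⟩⟩
  have hint : ∀ l p, ∃ z : ℤ, x l p = (z:ℝ) / Q := by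
    intro l
    cases l with
    | zero => exact fun p => (hx0 p).2
    | succ l =>
      intro p
      rw [hupd (l+1) (by omega) p]
      exact ⟨_, rfl⟩
  have hsup_mem : ∀ l, ∃ p, x l p = sSup (Set.range (x l)) := fun l =>
    (Set.range_nonempty (x l)).csSup_mem (Set.finite_range _)
  have hinf_mem : ∀ l, ∃ p, x l p = sInf (Set.range (x l)) := fun l =>
    (Set.range_nonempty (x l)).csInf_mem (Set.finite_range _)
  have hle_sup : ∀ l p, x l p ≤ sSup (Set.range (x l)) := fun l p =>
    le_csSup (Set.finite_range (x l)).bddAbove ⟨p, rfl⟩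
  have hinf_le : ∀ l p, sInf (Set.range (x l)) ≤ x l p := fun l p =>
    csInf_le (Set.finite_range (x l)).bddBelow ⟨p, rfl⟩
  have hdelta0 : delta (x 0) ≤ 1 := by
    have h1 : sSup (Set.range (x 0)) ≤ 1 := by
      apply csSup_le (Set.range_nonempty (x 0))
      rintro y ⟨p, rfl⟩
      exact (hx0 p).1.2
    have h2 : (0:ℝ) ≤ sInf (Set.range (x 0)) := by
      apply le_csInf (Set.range_nonempty (x 0))
      rintro y ⟨p, rfl⟩
      exact (hx0 p).1.1
    rw [delta]; linarith
  -- the halving recurrence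
  have hrec : ∀ l : ℕ, delta (x (l+1)) ≤ delta (x l) / 2 + 1 / (2*(Q:ℝ)) := by
    intro l
    have hup : ∀ p, x (l+1) p = roundQ Q
        ((sInf (x l '' {q | ProdSeg G (l * (n - 1)) (n - 1) q p}) +
          sSup (x l '' {q | ProdSeg G (l * (n - 1)) (n - 1) q p})) / 2) := by
      intro p
      have h := hupd (l+1) (by omega) p
      simpa using h
    obtain ⟨p₁, hp₁⟩ := hsup_mem (l+1)
    obtain ⟨p₂, hp₂⟩ := hinf_mem (l+1)
    obtain ⟨c, hc₁, hc₂⟩ := key_nonsplit hn G hrefl hrooted (l*(n-1)) p₁ p₂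
    set S1 := x l '' {q | ProdSeg G (l * (n - 1)) (n - 1) q p₁} with hS1def
    set S2 := x l '' {q | ProdSeg G (l * (n - 1)) (n - 1) q p₂} with hS2def
    have hS1ne : S1.Nonempty := ⟨x l p₁, p₁, prodSeg_refl G hrefl _ _ p₁, rfl⟩
    have hS2ne : S2.Nonempty := ⟨x l p₂, p₂, prodSeg_refl G hrefl _ _ p₂, rfl⟩
    have hfin1 : S1.Finite := Set.toFinite _
    have hfin2 : S2.Finite := Set.toFinite _
    have hfc1 : x l c ∈ S1 := ⟨c, hc₁, rfl⟩
    have hfc2 : x l c ∈ S2 := ⟨c, hc₂, rfl⟩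
    -- upper bound for the new maximum
    have hi1 : sInf S1 ≤ x l c := csInf_le hfin1.bddBelow hfc1
    have hs1 : sSup S1 ≤ sSup (Set.range (x l)) := by
      obtain ⟨q, -, hq⟩ := hS1ne.csSup_mem hfin1
      rw [← hq]; exact hle_sup l q
    have hub : x (l+1) p₁ ≤ (x l c + sSup (Set.range (x l))) / 2 := by
      rw [hup p₁]
      have h := roundQ_le hQ0 ((sInf S1 + sSup S1) / 2)
      calc roundQ Q ((sInf S1 + sSup S1) / 2) ≤ (sInf S1 + sSup S1) / 2 := h
        _ ≤ (x l c + sSup (Set.range (x l))) / 2 := by linarith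
    -- lower bound for the new minimum
    have hi2M : sInf (Set.range (x l)) ≤ sInf S2 := by
      obtain ⟨q, -, hq⟩ := hS2ne.csInf_mem hfin2
      rw [← hq]; exact hinf_le l q
    have hs2 : x l c ≤ sSup S2 := le_csSup hfin2.bddAbove hfc2
    obtain ⟨q1, -, hq1⟩ := hS2ne.csInf_mem hfin2
    obtain ⟨q2, -, hq2⟩ := hS2ne.csSup_mem hfin2
    obtain ⟨z1, hz1⟩ := hint l q1
    obtain ⟨z2, hz2⟩ := hint l q2
    have hinf2 : sInf S2 = (z1:ℝ)/Q := by rw [← hq1, hz1]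
    have hsup2 : sSup S2 = (z2:ℝ)/Q := by rw [← hq2, hz2]
    have hlb : (sInf (Set.range (x l)) + x l c) / 2 - 1/(2*(Q:ℝ)) ≤ x (l+1) p₂ := by
      rw [hup p₂, hinf2, hsup2]
      have h := roundQ_ge_half hQ0 z1 z2
      have h2 : (sInf (Set.range (x l)) + x l c) / 2 ≤ ((z1:ℝ)/Q + (z2:ℝ)/Q)/2 := by
        rw [← hinf2, ← hsup2]; linarith
      linarith
    have hdl : delta (x (l+1)) = x (l+1) p₁ - x (l+1) p₂ := by
      rw [delta, hp₁, hp₂]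
    rw [hdl, delta]
    linarith
  -- telescoped inequality
  have htel : ∀ l : ℕ, (2:ℝ)^l * ((Q:ℝ) * delta (x l) - 1) ≤ (Q:ℝ) - 1 := by
    intro l
    induction l with
    | zero =>
      simp only [pow_zero, one_mul]
      nlinarith [hdelta0]
    | succ l ih =>
      have h := hrec l
      have hstep : (Q:ℝ) * delta (x (l+1)) - 1 ≤ ((Q:ℝ) * delta (x l) - 1) / 2 := by
        have hm := mul_le_mul_of_nonneg_left h hQ0.le
        have hq2 : (Q:ℝ) * (1/(2*(Q:ℝ))) = 1/2 := by field_simp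
        have hq3 : (Q:ℝ) * (delta (x l) / 2 + 1/(2*(Q:ℝ)))
            = (Q:ℝ) * delta (x l) / 2 + (Q:ℝ) * (1/(2*(Q:ℝ))) := by ring
        rw [hq3, hq2] at hm
        linarith
      have h2l : (0:ℝ) ≤ 2^l := by positivity
      calc (2:ℝ)^(l+1) * ((Q:ℝ) * delta (x (l+1)) - 1)
          = 2^l * (2 * ((Q:ℝ) * delta (x (l+1)) - 1)) := by ring
        _ ≤ 2^l * ((Q:ℝ) * delta (x l) - 1) := by
            apply mul_le_mul_of_nonneg_left _ h2l
            linarith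
        _ ≤ (Q:ℝ) - 1 := ih
  -- conclusion
  intro l hl
  set k := ⌊Real.logb 2 ((Q : ℝ) - 2)⌋₊ with hkdef
  have hQ3 : (3:ℝ) ≤ (Q:ℝ) := by exact_mod_cast hQ
  have hlog : Real.logb 2 ((Q:ℝ) - 2) < (k:ℝ) + 1 := Nat.lt_floor_add_one _
  have hpow1 : (Q:ℝ) - 2 < 2^(k+1) := by
    have h2 : (Q:ℝ) - 2 = (2:ℝ) ^ (Real.logb 2 ((Q:ℝ) - 2)) :=
      (Real.rpow_logb (by norm_num) (by norm_num) (by linarith)).symm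
    calc (Q:ℝ) - 2 = (2:ℝ) ^ (Real.logb 2 ((Q:ℝ) - 2)) := h2
      _ < (2:ℝ) ^ ((k:ℝ) + 1) := Real.rpow_lt_rpow_of_exponent_lt one_lt_two hlog
      _ = (2:ℝ)^(k+1) := by
          rw [show ((k:ℝ) + 1) = ((k+1 : ℕ):ℝ) by push_cast; ring, Real.rpow_natCast]
  have hpow2 : (Q:ℝ) - 1 < 2^(k+2) := by
    have he : (2:ℝ)^(k+2) = 2 * 2^(k+1) := by ring
    linarith
  have hpowl : (2:ℝ)^(k+2) ≤ 2^l := by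
    apply pow_le_pow_right₀ (by norm_num) hl
  obtain ⟨p₁, hp₁⟩ := hsup_mem l
  obtain ⟨p₂, hp₂⟩ := hinf_mem l
  obtain ⟨z1, hz1⟩ := hint l p₁
  obtain ⟨z2, hz2⟩ := hint l p₂
  have hd : delta (x l) = ((z1 - z2 : ℤ):ℝ)/Q := by
    rw [delta, ← hp₁, ← hp₂, hz1, hz2]
    push_cast
    ring
  by_cases hz : z1 - z2 ≤ 1
  · rw [hd]
    gcongr
    exact_mod_cast hz
  · exfalso
    push_neg at hz
    have h2z : (2:ℝ) ≤ ((z1 - z2 : ℤ):ℝ) := by exact_mod_cast hz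
    have ht := htel l
    rw [hd] at ht
    have hQz : (Q:ℝ) * (((z1 - z2 : ℤ):ℝ)/Q) = ((z1 - z2 : ℤ):ℝ) := by field_simp
    rw [hQz] at ht
    have h2l : (0:ℝ) < 2^l := by positivity
    nlinarith [hpowl, hpow2]
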